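/- arXiv:1807.08366 — 2 statements merged into one kernel-verified Lean document; each statement's English description precedes it below -/
import Mathlib

section
/- Let H(K) be a reproducing kernel Hilbert space on X with kernel K, and let f : X → ℂ. Then f ∈ H(K) with ‖f‖ ≤ c if and only if the kernel (z,w) ↦ c²K(z,w) − f(z)\overline{f(w)} is a positive kernel on X. -/
/-!
Expanding the Gram sums, positivity of the kernel `c²K(z,w) − f(z) conj f(w)` says exactly
that `|∑ aᵢ f(xᵢ)| ≤ c ‖∑ conj(aᵢ) k_{xᵢ}‖` for all finite families. If `f = ⟪k_·, g⟫` with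
`‖g‖ ≤ c`, this is Cauchy–Schwarz. Conversely, the inequality makes
`∑ bᵢ k_{xᵢ} ↦ ∑ bᵢ conj f(xᵢ)` a well-defined functional of norm at most `c` on the span of the
kernel functions; Hahn–Banach and the Riesz representation theorem produce `g` with `‖g‖ ≤ c`
representing it, and the reproducing property then gives `J g = f`.
-/

open Complex Finset
open scoped ComplexOrder

/-- A positive (semi-definite) kernel on `X`: self-adjoint and all finite
Gram-type sums are nonnegative. -/
def IsPositiveKernel {X : Type*} (K : X → X → ℂ) : Prop :=
  (∀ x y, K x y = starRingEnd ℂ (K y x)) ∧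
  ∀ (n : ℕ) (l : Fin n → X) (a : Fin n → ℂ),
    0 ≤ ∑ i, ∑ j, a i * starRingEnd ℂ (a j) * K (l i) (l j)

open scoped InnerProductSpace

section GramSum

variable {𝕜 E ι : Type*} [RCLike 𝕜] [NormedAddCommGroup E] [InnerProductSpace 𝕜 E]

theorem sum_sum_mul_inner_eq_norm_sq (s : Finset ι) (a : ι → 𝕜) (v : ι → E) :
    ∑ i ∈ s, ∑ j ∈ s, a i * starRingEnd 𝕜 (a j) * ⟪v i, v j⟫_𝕜
      = (‖∑ i ∈ s, starRingEnd 𝕜 (a i) • v i‖ : 𝕜) ^ 2 := by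
  rw [← inner_self_eq_norm_sq_to_K, sum_inner]
  simp only [inner_sum, inner_smul_left, inner_smul_right, RCLike.conj_conj]
  refine sum_congr rfl fun i _ => sum_congr rfl fun j _ => ?_
  ring

theorem sum_sum_mul_mul_conj_eq_norm_sq (s : Finset ι) (a f : ι → 𝕜) :
    ∑ i ∈ s, ∑ j ∈ s, a i * starRingEnd 𝕜 (a j) * (f i * starRingEnd 𝕜 (f j))
      = (‖∑ i ∈ s, a i * f i‖ : 𝕜) ^ 2 := by
  rw [← RCLike.mul_conj, map_sum, Finset.sum_mul_sum]
  refine sum_congr rfl fun i _ => sum_congr rfl fun j _ => ?_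
  rw [map_mul]
  ring

end GramSum

theorem sum_sum_mul_kernel_eq {ι H : Type*} [NormedAddCommGroup H] [InnerProductSpace ℂ H]
    (s : Finset ι) (a : ι → ℂ) (k : ι → H) (f : ι → ℂ) (c : ℝ) :
    ∑ i ∈ s, ∑ j ∈ s, a i * starRingEnd ℂ (a j) *
        ((c : ℂ) ^ 2 * ⟪k i, k j⟫_ℂ - f i * starRingEnd ℂ (f j))
      = ((c ^ 2 * ‖∑ i ∈ s, starRingEnd ℂ (a i) • k i‖ ^ 2
          - ‖∑ i ∈ s, a i * f i‖ ^ 2 : ℝ) : ℂ) := by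
  simp only [mul_sub, sum_sub_distrib, mul_left_comm _ ((c : ℂ) ^ 2), ← Finset.mul_sum,
    sum_sum_mul_inner_eq_norm_sq, sum_sum_mul_mul_conj_eq_norm_sq, RCLike.ofReal_eq_complex_ofReal]
  push_cast
  ring

theorem IsPositiveKernel.sum_finset_nonneg {X : Type*} {K : X → X → ℂ} (hK : IsPositiveKernel K)
    (s : Finset X) (a : X → ℂ) :
    0 ≤ ∑ x ∈ s, ∑ y ∈ s, a x * starRingEnd ℂ (a y) * K x y := by
  have sum_eq (g : X → ℂ) : ∑ x ∈ s, g x = ∑ i, g (s.equivFin.symm i) := by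
    rw [← s.sum_coe_sort, ← s.equivFin.symm.sum_comp]
  simpa only [sum_eq] using
    hK.2 s.card (fun i => s.equivFin.symm i) (fun i => a (s.equivFin.symm i))

theorem LinearMap.exists_comp_rangeRestrict_eq {R M N P : Type*} [Ring R] [AddCommGroup M]
    [Module R M] [AddCommGroup N] [Module R N] [AddCommGroup P] [Module R P]
    (T : M →ₗ[R] N) (φ : M →ₗ[R] P) (h : ker T ≤ ker φ) :
    ∃ ψ : range T →ₗ[R] P, ψ ∘ₗ T.rangeRestrict = φ :=
  ⟨(ker T).liftQ φ h ∘ₗ T.quotKerEquivRange.symm.toLinearMap, by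
    ext m
    exact congrArg ((ker T).liftQ φ h) (T.quotKerEquivRange_symm_apply_image m _)⟩

theorem exists_inner_eq_of_norm_le {𝕜 M E : Type*} [RCLike 𝕜] [AddCommGroup M] [Module 𝕜 M]
    [NormedAddCommGroup E] [InnerProductSpace 𝕜 E] [CompleteSpace E]
    (T : M →ₗ[𝕜] E) (φ : M →ₗ[𝕜] 𝕜) {c : ℝ} (hc : 0 ≤ c) (h : ∀ m, ‖φ m‖ ≤ c * ‖T m‖) :
    ∃ g : E, ‖g‖ ≤ c ∧ ∀ m, ⟪g, T m⟫_𝕜 = φ m := by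
  obtain ⟨ψ, hψ⟩ := T.exists_comp_rangeRestrict_eq φ fun m hm => by
    simpa [LinearMap.mem_ker.1 hm] using h m
  have hψ_le (u : LinearMap.range T) : ‖ψ u‖ ≤ c * ‖u‖ := by
    obtain ⟨m, rfl⟩ := T.surjective_rangeRestrict u
    simpa [← hψ] using h m
  obtain ⟨G, hGψ, hG⟩ := exists_extension_norm_eq _ (ψ.mkContinuous c hψ_le)
  refine ⟨(InnerProductSpace.toDual 𝕜 E).symm G, ?_, fun m => ?_⟩
  · rw [LinearIsometryEquiv.norm_map, hG]
    exact LinearMap.mkContinuous_norm_le ψ hc hψ_le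
  · rw [InnerProductSpace.toDual_symm_apply, ← hψ]
    exact hGψ (T.rangeRestrict m)

section Kernel

variable {X H : Type*} [NormedAddCommGroup H] [InnerProductSpace ℂ H]

theorem isPositiveKernel_of_norm_le (k : X → H) (g : H) {c : ℝ} (hg : ‖g‖ ≤ c) :
    IsPositiveKernel fun z w =>
      (c : ℂ) ^ 2 * ⟪k z, k w⟫_ℂ - ⟪k z, g⟫_ℂ * starRingEnd ℂ ⟪k w, g⟫_ℂ := by
  refine ⟨fun x y => ?_, fun n l a => ?_⟩
  · simp only [map_sub, map_mul, map_pow, conj_ofReal, inner_conj_symm]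
    ring
  · rw [sum_sum_mul_kernel_eq univ a (fun i => k (l i)) (fun i => ⟪k (l i), g⟫_ℂ) c]
    set u := ∑ i, starRingEnd ℂ (a i) • k (l i)
    have hu : ∑ i, a i * ⟪k (l i), g⟫_ℂ = ⟪u, g⟫_ℂ := by
      simp only [u, sum_inner, inner_smul_left, conj_conj]
    rw [hu, zero_le_real, sub_nonneg]
    calc ‖⟪u, g⟫_ℂ‖ ^ 2 ≤ (‖u‖ * ‖g‖) ^ 2 := by gcongr; exact norm_inner_le_norm u g
      _ ≤ (‖u‖ * c) ^ 2 := by gcongr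
      _ = c ^ 2 * ‖u‖ ^ 2 := by ring

theorem norm_sum_le_of_isPositiveKernel (k : X → H) (f : X → ℂ) {c : ℝ} (hc : 0 ≤ c)
    (hK : IsPositiveKernel fun z w => (c : ℂ) ^ 2 * ⟪k z, k w⟫_ℂ - f z * starRingEnd ℂ (f w))
    (s : Finset X) (b : X → ℂ) :
    ‖∑ x ∈ s, b x * f x‖ ≤ c * ‖∑ x ∈ s, starRingEnd ℂ (b x) • k x‖ := by
  have h := hK.sum_finset_nonneg s b
  rw [sum_sum_mul_kernel_eq s b k f c, zero_le_real, sub_nonneg, ← mul_pow] at h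
  exact (pow_le_pow_iff_left₀ (norm_nonneg _) (by positivity) two_ne_zero).1 h

end Kernel

theorem mem_rkhs_iff_positive_kernel_general {X : Type*} {H : Type*}
    [NormedAddCommGroup H] [InnerProductSpace ℂ H] [CompleteSpace H]
    (k : X → H) (J : H →ₗ[ℂ] (X → ℂ))
    (hrep : ∀ (g : H) (w : X), (inner ℂ (k w) g : ℂ) = J g w)
    (f : X → ℂ) (c : ℝ) (hc : 0 ≤ c) :
    (∃ g : H, J g = f ∧ ‖g‖ ≤ c) ↔
      IsPositiveKernel (fun z w =>
        (c : ℂ) ^ 2 * (inner ℂ (k z) (k w) : ℂ) - f z * starRingEnd ℂ (f w)) := by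
  constructor
  · rintro ⟨g, rfl, hg⟩
    simp only [← hrep]
    exact isPositiveKernel_of_norm_le k g hg
  · intro hK
    obtain ⟨g, hg, hgT⟩ := exists_inner_eq_of_norm_le (Finsupp.linearCombination ℂ k)
      (Finsupp.linearCombination ℂ fun x => starRingEnd ℂ (f x)) hc fun b => by
        rw [Finsupp.linearCombination_apply, Finsupp.linearCombination_apply, Finsupp.sum,
          Finsupp.sum, ← norm_conj, map_sum]
        simpa only [smul_eq_mul, map_mul, conj_conj] using
          norm_sum_le_of_isPositiveKernel k f hc hK b.support fun x => starRingEnd ℂ (b x)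
    refine ⟨g, funext fun w => ?_, hg⟩
    have hgk : ⟪g, k w⟫_ℂ = starRingEnd ℂ (f w) := by
      simpa using hgT (Finsupp.single w 1)
    rw [← hrep, ← inner_conj_symm, hgk, conj_conj]

/-- `f ∈ H(K)` with `‖f‖ ≤ c` iff `(z,w) ↦ c²K(z,w) − f(z)conj(f(w))` is a positive kernel. -/
theorem mem_rkhs_iff_positive_kernel {X : Type*} {H : Type*}
    [NormedAddCommGroup H] [InnerProductSpace ℂ H] [CompleteSpace H]
    (k : X → H) (J : H →ₗ[ℂ] (X → ℂ)) (hJ : Function.Injective J)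
    (hrep : ∀ (g : H) (w : X), (inner ℂ (k w) g : ℂ) = J g w)
    (f : X → ℂ) (c : ℝ) (hc : 0 ≤ c) :
    (∃ g : H, J g = f ∧ ‖g‖ ≤ c) ↔
      IsPositiveKernel (fun z w =>
        (c : ℂ) ^ 2 * (inner ℂ (k z) (k w) : ℂ) - f z * starRingEnd ℂ (f w)) :=
  mem_rkhs_iff_positive_kernel_general k J hrep f c hc
end

section
/- Let b : 𝔻 → ℂ be holomorphic with |b| ≤ 1 on 𝔻. If there is a constant C with (1 − |b(z)|²)/(1 − |z|²) ≤ C for all z ∈ 𝔻, then b is a finite Blaschke product. -/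
/-!
Write the hypothesis as `1 - ‖b z‖² ≤ C (1 - ‖z‖²)`. Every zero `a` of `b` then satisfies
`1 - ‖a‖² ≥ 1 / C`, so at a point `w` with `C (1 - ‖w‖²) < 1`, where `b w ≠ 0`, the Blaschke factor
`φ_a` of any zero has `‖φ_a w‖² ≤ q` for one `q < 1`. Dividing `b` by `φ_a` keeps it holomorphic,
bounded by `1` (maximum principle, as `‖φ_a‖ → 1` at the boundary) and subject to the same bound
with the same `C`, while `‖b w‖²` grows by the factor `1 / q`; as it stays `≤ 1`, only finitely many
zeros can be divided out. A zero-free such function has `‖1 / b‖² ≤ 1 / (1 - C (1 - ‖z‖²)) → 1` at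
the boundary, so `‖b‖ = 1` on the disk and `b` is a unimodular constant.
-/

open Metric ComplexConjugate Filter Topology

noncomputable def blaschkeFactor (a z : ℂ) : ℂ := (z - a) / (1 - conj a * z)

section BlaschkeFactor

variable {a z : ℂ}

lemma norm_one_sub_conj_mul_sq_sub_norm_sub_sq (a z : ℂ) :
    ‖1 - conj a * z‖ ^ 2 - ‖z - a‖ ^ 2 = (1 - ‖z‖ ^ 2) * (1 - ‖a‖ ^ 2) := by
  simp only [Complex.sq_norm, Complex.normSq_apply, Complex.sub_re, Complex.sub_im,
    Complex.mul_re, Complex.mul_im, Complex.one_re, Complex.one_im, Complex.conj_re,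
    Complex.conj_im]
  ring

lemma one_sub_norm_le_norm_one_sub_conj_mul (hz : ‖z‖ ≤ 1) : 1 - ‖a‖ ≤ ‖1 - conj a * z‖ := by
  have h := norm_sub_norm_le (1 : ℂ) (conj a * z)
  rw [norm_one, norm_mul, Complex.norm_conj] at h
  nlinarith [norm_nonneg a]

lemma norm_one_sub_conj_mul_le_two (ha : ‖a‖ ≤ 1) (hz : ‖z‖ ≤ 1) : ‖1 - conj a * z‖ ≤ 2 := by
  have h := norm_sub_le (1 : ℂ) (conj a * z)
  rw [norm_one, norm_mul, Complex.norm_conj] at h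
  nlinarith [norm_nonneg a]

lemma one_sub_norm_sq_blaschkeFactor (ha : ‖a‖ < 1) (hz : ‖z‖ ≤ 1) :
    1 - ‖blaschkeFactor a z‖ ^ 2 = (1 - ‖z‖ ^ 2) * (1 - ‖a‖ ^ 2) / ‖1 - conj a * z‖ ^ 2 := by
  have hden : 0 < ‖1 - conj a * z‖ :=
    (sub_pos.2 ha).trans_le (one_sub_norm_le_norm_one_sub_conj_mul hz)
  rw [blaschkeFactor, norm_div, div_pow, ← norm_one_sub_conj_mul_sq_sub_norm_sub_sq, sub_div,
    div_self (by positivity)]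

lemma norm_blaschkeFactor_le_one (ha : ‖a‖ < 1) (hz : ‖z‖ ≤ 1) : ‖blaschkeFactor a z‖ ≤ 1 := by
  have h := one_sub_norm_sq_blaschkeFactor ha hz
  have : 0 ≤ (1 - ‖z‖ ^ 2) * (1 - ‖a‖ ^ 2) / ‖1 - conj a * z‖ ^ 2 := by
    apply div_nonneg (mul_nonneg _ _) (sq_nonneg _) <;> nlinarith [norm_nonneg z, norm_nonneg a]
  exact (sq_le_one_iff₀ (norm_nonneg _)).1 (by linarith)

lemma one_sub_norm_sq_blaschkeFactor_le (ha : ‖a‖ < 1) (hz : ‖z‖ ≤ 1) :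
    1 - ‖blaschkeFactor a z‖ ^ 2 ≤ (1 + ‖a‖) / (1 - ‖a‖) * (1 - ‖z‖ ^ 2) := by
  have h1a : 0 < 1 - ‖a‖ := sub_pos.2 ha
  have hz2 : 0 ≤ 1 - ‖z‖ ^ 2 := by nlinarith [norm_nonneg z]
  rw [one_sub_norm_sq_blaschkeFactor ha hz]
  calc (1 - ‖z‖ ^ 2) * (1 - ‖a‖ ^ 2) / ‖1 - conj a * z‖ ^ 2
      ≤ (1 - ‖z‖ ^ 2) * (1 - ‖a‖ ^ 2) / (1 - ‖a‖) ^ 2 := by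
        gcongr
        · exact mul_nonneg hz2 (by nlinarith [norm_nonneg a])
        · exact one_sub_norm_le_norm_one_sub_conj_mul hz
    _ = (1 + ‖a‖) / (1 - ‖a‖) * (1 - ‖z‖ ^ 2) := by field_simp; ring

lemma mul_div_four_le_one_sub_norm_sq_blaschkeFactor (ha : ‖a‖ < 1) (hz : ‖z‖ ≤ 1) :
    (1 - ‖z‖ ^ 2) * (1 - ‖a‖ ^ 2) / 4 ≤ 1 - ‖blaschkeFactor a z‖ ^ 2 := by
  have hden : 0 < ‖1 - conj a * z‖ :=
    (sub_pos.2 ha).trans_le (one_sub_norm_le_norm_one_sub_conj_mul hz)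
  rw [one_sub_norm_sq_blaschkeFactor ha hz]
  gcongr
  · apply mul_nonneg <;> nlinarith [norm_nonneg z, norm_nonneg a]
  · nlinarith [norm_one_sub_conj_mul_le_two ha.le hz]

lemma norm_sq_blaschkeFactor_le_of_one_le_mul {C : ℝ} (ha : ‖a‖ < 1)
    (hC : 1 ≤ C * (1 - ‖a‖ ^ 2)) (hz : ‖z‖ ≤ 1) :
    ‖blaschkeFactor a z‖ ^ 2 ≤ 1 - (1 - ‖z‖ ^ 2) / (4 * C) := by
  have ha2 : 0 < 1 - ‖a‖ ^ 2 := by nlinarith [norm_nonneg a]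
  have hz2 : 0 ≤ 1 - ‖z‖ ^ 2 := by nlinarith [norm_nonneg z]
  have hC0 : 0 < C := pos_of_mul_pos_left (one_pos.trans_le hC) ha2.le
  have h := mul_div_four_le_one_sub_norm_sq_blaschkeFactor ha hz
  have hle : (1 - ‖z‖ ^ 2) / (4 * C) ≤ (1 - ‖z‖ ^ 2) * (1 - ‖a‖ ^ 2) / 4 := by
    rw [div_le_div_iff₀ (by positivity) four_pos]
    nlinarith [mul_le_mul_of_nonneg_left hC hz2]
  linarith

end BlaschkeFactor

def IsFiniteBlaschkeProduct (f : ℂ → ℂ) : Prop :=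
  ∃ (N : ℕ) (lam : ℂ) (a : Fin N → ℂ), ‖lam‖ = 1 ∧ (∀ k, a k ∈ ball (0 : ℂ) 1) ∧
    ∀ z ∈ ball (0 : ℂ) 1, f z = lam * ∏ k, blaschkeFactor (a k) z

lemma IsFiniteBlaschkeProduct.of_eqOn_blaschkeFactor_mul {f g : ℂ → ℂ} {a : ℂ}
    (hg : IsFiniteBlaschkeProduct g) (ha : a ∈ ball (0 : ℂ) 1)
    (hfg : ∀ z ∈ ball (0 : ℂ) 1, f z = blaschkeFactor a z * g z) : IsFiniteBlaschkeProduct f := by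
  obtain ⟨N, lam, b, hlam, hb, hgb⟩ := hg
  refine ⟨N + 1, lam, Fin.cons a b, hlam, Fin.cases ha hb, fun z hz => ?_⟩
  rw [hfg z hz, hgb z hz, Fin.prod_univ_succ, Fin.cons_zero]
  simp only [Fin.cons_succ]
  ring

lemma exists_eqOn_blaschkeFactor_mul {f : ℂ → ℂ} {a : ℂ} (hf : DifferentiableOn ℂ f (ball 0 1))
    (ha : a ∈ ball (0 : ℂ) 1) (hfa : f a = 0) :
    ∃ g : ℂ → ℂ, DifferentiableOn ℂ g (ball 0 1) ∧
      ∀ z ∈ ball (0 : ℂ) 1, f z = blaschkeFactor a z * g z := by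
  have hslope_diff : DifferentiableOn ℂ (dslope f a) (ball 0 1) :=
    (Complex.differentiableOn_dslope (isOpen_ball.mem_nhds ha)).2 hf
  refine ⟨fun z => (1 - conj a * z) * dslope f a z,
    DifferentiableOn.mul (by fun_prop) hslope_diff, fun z hz => ?_⟩
  have hden : 0 < ‖1 - conj a * z‖ := (sub_pos.2 (mem_ball_zero_iff.1 ha)).trans_le
    (one_sub_norm_le_norm_one_sub_conj_mul (mem_ball_zero_iff.1 hz).le)
  have hslope := sub_smul_dslope f a z
  rw [smul_eq_mul, hfa, sub_zero] at hslope
  change f z = (z - a) / (1 - conj a * z) * ((1 - conj a * z) * dslope f a z)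
  rw [← mul_assoc, div_mul_cancel₀ _ (norm_pos_iff.1 hden), hslope]

section MaximumModulus

variable {f : ℂ → ℂ}

lemma norm_le_of_forall_eventually_norm_le_on_sphere {R c : ℝ}
    (hf : DifferentiableOn ℂ f (ball 0 R))
    (h : ∀ ε > 0, ∀ᶠ r in 𝓝[<] R, ∀ w : ℂ, ‖w‖ = r → ‖f w‖ ≤ c + ε)
    {z : ℂ} (hz : z ∈ ball 0 R) : ‖f z‖ ≤ c := by
  refine le_of_forall_pos_le_add fun ε hε => ?_
  obtain ⟨r, hr, hzr, hrR⟩ :=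
    ((h ε hε).and (Ioo_mem_nhdsLT (mem_ball_zero_iff.1 hz))).exists
  have hr0 : r ≠ 0 := ((norm_nonneg z).trans_lt hzr).ne'
  refine Complex.norm_le_of_forall_mem_frontier_norm_le isBounded_ball
    (hf.diffContOnCl_ball (closedBall_subset_ball hrR)) (fun w hw => hr w ?_)
    (subset_closure (mem_ball_zero_iff.2 hzr))
  rwa [frontier_ball 0 hr0, mem_sphere_zero_iff_norm] at hw

lemma norm_le_one_of_forall_one_sub_mul_mul_norm_sq_le {K : ℝ}
    (hf : DifferentiableOn ℂ f (ball 0 1))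
    (h : ∀ w ∈ ball (0 : ℂ) 1, (1 - K * (1 - ‖w‖ ^ 2)) * ‖f w‖ ^ 2 ≤ 1)
    {z : ℂ} (hz : z ∈ ball 0 1) : ‖f z‖ ≤ 1 := by
  refine norm_le_of_forall_eventually_norm_le_on_sphere hf (fun ε hε => ?_) hz
  have hlim : Tendsto (fun r : ℝ => 1 - K * (1 - r ^ 2)) (𝓝[<] 1) (𝓝 1) := by
    have hcont : Continuous fun r : ℝ => 1 - K * (1 - r ^ 2) := by fun_prop
    simpa using (hcont.tendsto 1).mono_left nhdsWithin_le_nhds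
  have hlt : ((1 + ε) ^ 2)⁻¹ < 1 := inv_lt_one_of_one_lt₀ (one_lt_pow₀ (by linarith) two_ne_zero)
  filter_upwards [hlim.eventually (lt_mem_nhds hlt), self_mem_nhdsWithin] with r hr hr1 w hw
  have hw1 := h w (mem_ball_zero_iff.2 (hw.trans_lt hr1))
  rw [hw] at hw1
  have hsq : ‖f w‖ ^ 2 ≤ (1 + ε) ^ 2 := by
    rw [← inv_mul_le_one₀ (by positivity)]
    exact (mul_le_mul_of_nonneg_right hr.le (sq_nonneg _)).trans hw1
  exact (pow_le_pow_iff_left₀ (norm_nonneg _) (by positivity) two_ne_zero).1 hsq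

end MaximumModulus

structure IsSchurWithRatioBound (C : ℝ) (f : ℂ → ℂ) : Prop where
  differentiableOn : DifferentiableOn ℂ f (ball 0 1)
  norm_le_one : ∀ z ∈ ball (0 : ℂ) 1, ‖f z‖ ≤ 1
  one_sub_norm_sq_le : ∀ z ∈ ball (0 : ℂ) 1, 1 - ‖f z‖ ^ 2 ≤ C * (1 - ‖z‖ ^ 2)

namespace IsSchurWithRatioBound

variable {C : ℝ} {f : ℂ → ℂ}

lemma isFiniteBlaschkeProduct_of_forall_ne_zero (hf : IsSchurWithRatioBound C f)
    (h0 : ∀ z ∈ ball (0 : ℂ) 1, f z ≠ 0) : IsFiniteBlaschkeProduct f := by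
  have hinv : ∀ z ∈ ball (0 : ℂ) 1, ‖(f z)⁻¹‖ ≤ 1 := by
    refine fun z hz => norm_le_one_of_forall_one_sub_mul_mul_norm_sq_le (K := C)
      (hf.differentiableOn.inv h0) (fun w hw => ?_) hz
    have hfw : 0 < ‖f w‖ := norm_pos_iff.2 (h0 w hw)
    rw [Pi.inv_apply, norm_inv, inv_pow, ← div_eq_mul_inv, div_le_one (by positivity)]
    linarith [hf.one_sub_norm_sq_le w hw]
  have hnorm : ∀ z ∈ ball (0 : ℂ) 1, ‖f z‖ = 1 := fun z hz =>
    le_antisymm (hf.norm_le_one z hz)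
      ((inv_le_one₀ (norm_pos_iff.2 (h0 z hz))).1 (by simpa using hinv z hz))
  have h0mem : (0 : ℂ) ∈ ball (0 : ℂ) 1 := mem_ball_self one_pos
  have hmax : IsMaxOn (norm ∘ f) (ball 0 1) 0 := fun z hz => by
    simp [hnorm z hz, hnorm 0 h0mem]
  have hconst := Complex.eqOn_of_isPreconnected_of_isMaxOn_norm (convex_ball 0 1).isPreconnected
    isOpen_ball hf.differentiableOn h0mem hmax
  exact ⟨0, f 0, Fin.elim0, hnorm 0 h0mem, fun k => k.elim0, fun z hz => by simpa using hconst hz⟩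

lemma of_eqOn_blaschkeFactor_mul {g : ℂ → ℂ} {a : ℂ} (hf : IsSchurWithRatioBound C f)
    (ha : a ∈ ball (0 : ℂ) 1) (hg : DifferentiableOn ℂ g (ball 0 1))
    (hfg : ∀ z ∈ ball (0 : ℂ) 1, f z = blaschkeFactor a z * g z) : IsSchurWithRatioBound C g := by
  have ha1 : ‖a‖ < 1 := mem_ball_zero_iff.1 ha
  refine ⟨hg, fun z hz => ?_, fun z hz => ?_⟩
  · refine norm_le_one_of_forall_one_sub_mul_mul_norm_sq_le (K := (1 + ‖a‖) / (1 - ‖a‖)) hg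
      (fun w hw => ?_) hz
    have hw1 : ‖w‖ ≤ 1 := (mem_ball_zero_iff.1 hw).le
    calc (1 - (1 + ‖a‖) / (1 - ‖a‖) * (1 - ‖w‖ ^ 2)) * ‖g w‖ ^ 2
        ≤ ‖blaschkeFactor a w‖ ^ 2 * ‖g w‖ ^ 2 := by
          gcongr
          linarith [one_sub_norm_sq_blaschkeFactor_le ha1 hw1]
      _ = ‖f w‖ ^ 2 := by rw [hfg w hw, norm_mul, mul_pow]
      _ ≤ 1 := pow_le_one₀ (norm_nonneg _) (hf.norm_le_one w hw)
  · have hfz : ‖f z‖ ≤ ‖g z‖ := by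
      rw [hfg z hz, norm_mul]
      exact mul_le_of_le_one_left (norm_nonneg _)
        (norm_blaschkeFactor_le_one ha1 (mem_ball_zero_iff.1 hz).le)
    nlinarith [norm_nonneg (f z), hf.one_sub_norm_sq_le z hz]

theorem isFiniteBlaschkeProduct_of_pow_lt {w : ℂ} {n : ℕ} (hf : IsSchurWithRatioBound C f)
    (hw : w ∈ ball (0 : ℂ) 1) (hn : (1 - (1 - ‖w‖ ^ 2) / (4 * C)) ^ n < ‖f w‖ ^ 2) :
    IsFiniteBlaschkeProduct f := by
  set q := 1 - (1 - ‖w‖ ^ 2) / (4 * C)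
  induction n generalizing f with
  | zero => exact absurd hn (not_lt.2 (by simpa using hf.norm_le_one w hw))
  | succ n ih =>
    by_cases hzero : ∃ a ∈ ball (0 : ℂ) 1, f a = 0
    · obtain ⟨a, ha, hfa⟩ := hzero
      obtain ⟨g, hg, hfg⟩ := exists_eqOn_blaschkeFactor_mul hf.differentiableOn ha hfa
      have hCa : 1 ≤ C * (1 - ‖a‖ ^ 2) := by simpa [hfa] using hf.one_sub_norm_sq_le a ha
      have hφ : ‖blaschkeFactor a w‖ ^ 2 ≤ q := norm_sq_blaschkeFactor_le_of_one_le_mul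
        (mem_ball_zero_iff.1 ha) hCa (mem_ball_zero_iff.1 hw).le
      refine (ih (hf.of_eqOn_blaschkeFactor_mul ha hg hfg) ?_).of_eqOn_blaschkeFactor_mul ha hfg
      refine lt_of_mul_lt_mul_left ?_ ((sq_nonneg _).trans hφ)
      calc q * q ^ n = q ^ (n + 1) := (pow_succ' q n).symm
        _ < ‖f w‖ ^ 2 := hn
        _ = ‖blaschkeFactor a w‖ ^ 2 * ‖g w‖ ^ 2 := by rw [hfg w hw, norm_mul, mul_pow]
        _ ≤ q * ‖g w‖ ^ 2 := by gcongr
    · push Not at hzero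
      exact hf.isFiniteBlaschkeProduct_of_forall_ne_zero hzero

end IsSchurWithRatioBound

lemma exists_mem_ball_mul_one_sub_norm_sq_lt_one (C : ℝ) :
    ∃ w ∈ ball (0 : ℂ) 1, C * (1 - ‖w‖ ^ 2) < 1 := by
  have hlim : Tendsto (fun r : ℝ => C * (1 - r ^ 2)) (𝓝[<] 1) (𝓝 0) := by
    have hcont : Continuous fun r : ℝ => C * (1 - r ^ 2) := by fun_prop
    simpa using (hcont.tendsto 1).mono_left nhdsWithin_le_nhds
  obtain ⟨r, hr, hr0, hr1⟩ :=
    ((hlim.eventually (gt_mem_nhds one_pos)).and (Ioo_mem_nhdsLT one_pos)).exists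
  refine ⟨r, ?_, ?_⟩
  · simpa [abs_of_pos hr0] using hr1
  · simpa [abs_of_pos hr0] using hr

/-- If `b` is holomorphic on 𝔻 with `|b| ≤ 1` and `(1 − |b(z)|²)/(1 − |z|²)` is
bounded on 𝔻, then `b` is a finite Blaschke product. -/
theorem bounded_ratio_implies_blaschke (b : ℂ → ℂ)
    (hb : DifferentiableOn ℂ b (Metric.ball (0 : ℂ) 1))
    (hb1 : ∀ z ∈ Metric.ball (0 : ℂ) 1, ‖b z‖ ≤ 1)
    (hC : ∃ C : ℝ, ∀ z ∈ Metric.ball (0 : ℂ) 1,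
      (1 - ‖b z‖ ^ 2) / (1 - ‖z‖ ^ 2) ≤ C) :
    ∃ (N : ℕ) (lam : ℂ) (a : Fin N → ℂ), ‖lam‖ = 1 ∧
      (∀ k, a k ∈ Metric.ball (0 : ℂ) 1) ∧
      ∀ z ∈ Metric.ball (0 : ℂ) 1,
        b z = lam * ∏ k, (z - a k) / (1 - starRingEnd ℂ (a k) * z) := by
  obtain ⟨C, hC⟩ := hC
  have hb' : IsSchurWithRatioBound (max C 1) b := by
    refine ⟨hb, hb1, fun z hz => ?_⟩
    have hz2 : 0 < 1 - ‖z‖ ^ 2 := by nlinarith [norm_nonneg z, mem_ball_zero_iff.1 hz]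
    exact (div_le_iff₀ hz2).1 ((hC z hz).trans (le_max_left C 1))
  obtain ⟨w, hw, hCw⟩ := exists_mem_ball_mul_one_sub_norm_sq_lt_one (max C 1)
  have hbw : 0 < ‖b w‖ ^ 2 := by linarith [hb'.one_sub_norm_sq_le w hw]
  have hδ : 0 < (1 - ‖w‖ ^ 2) / (4 * max C 1) := by
    have hw1 : ‖w‖ < 1 := mem_ball_zero_iff.1 hw
    have hC1 : 1 ≤ max C 1 := le_max_right C 1
    apply div_pos <;> nlinarith [norm_nonneg w]
  obtain ⟨n, hn⟩ := exists_pow_lt_of_lt_one hbw (sub_lt_self 1 hδ)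
  exact hb'.isFiniteBlaschkeProduct_of_pow_lt hw hn
end
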